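/- arXiv:1703.08934 — 4 statements merged into one kernel-verified Lean document; each statement's English description precedes it below -/
import Mathlib

section
/- The map f ↦ Γ(f) restricted to asymptotic evolution functions on M is a bijection onto the set of grid graphs over M; that is, for any grid graph Γ over M there is a unique asymptotic evolution function f with Γ(f) = Γ. -/
/-!
Common setup: multilevel discrete networks (Faure–Kaji, "A circuit-preserving
mapping from multilevel to Boolean dynamics").

A gene `i` takes levels in `{0,...,b i}`, encoded as `Fin (b i + 1)`.
The Boolean case is `b i = 1`.
-/

namespace GRN

section Generic

variable {ι : Type*} [Fintype ι] [DecidableEq ι] (b : ι → ℕ)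

/-- the state space `∏ i {0,…,b i}` -/
abbrev GState := ∀ i : ι, Fin (b i + 1)

/-- L¹ distance between states -/
def dist1 (x x' : GState b) : ℕ := ∑ i, Nat.dist (x i : ℕ) (x' i : ℕ)

/-- edge relation of the asynchronous state transition graph `Γ(f)` -/
def stgEdge (f : GState b → GState b) (x x' : GState b) : Prop :=
  ∃ j : ι, (∀ k, k ≠ j → x' k = x k) ∧
    (((x j : ℕ) < (f x j : ℕ) ∧ (x' j : ℕ) = (x j : ℕ) + 1) ∨
     ((f x j : ℕ) < (x j : ℕ) ∧ (x' j : ℕ) + 1 = (x j : ℕ)))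

/-- a grid graph: every edge joins states at distance one, and there are no
two parallel outward edges at any vertex -/
def IsGridGraph (E : GState b → GState b → Prop) : Prop :=
  (∀ x x', E x x' → dist1 b x x' = 1) ∧
  (∀ (x x' x'' : GState b) (j : ι), E x x' → E x x'' →
    (∀ k, k ≠ j → x' k = x k) → (∀ k, k ≠ j → x'' k = x k) → x' = x'')

/-- asymptotic evolution function: `f i x ∈ {0, x i, b i}` -/
def Asymptotic (f : GState b → GState b) : Prop :=
  ∀ (x : GState b) (i : ι), (f x i : ℕ) = 0 ∨ f x i = x i ∨ (f x i : ℕ) = b i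

/-- stepwise (unitary) evolution function: `|f i x - x i| ≤ 1` -/
def Stepwise (f : GState b → GState b) : Prop :=
  ∀ (x : GState b) (i : ι), (f x i : ℕ) ≤ (x i : ℕ) + 1 ∧ (x i : ℕ) ≤ (f x i : ℕ) + 1

/-- the asymptotic function `f̄` associated with `f` -/
def asym (f : GState b → GState b) : GState b → GState b := fun x i =>
  if (x i : ℕ) < (f x i : ℕ) then Fin.last (b i)
  else if (f x i : ℕ) < (x i : ℕ) then 0 else x i

/-- the stepwise function `f̂` associated with `f` -/
def stepw (f : GState b → GState b) : GState b → GState b := fun x i =>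
  if h : (x i : ℕ) < (f x i : ℕ) then ⟨(x i : ℕ) + 1, Nat.lt_of_le_of_lt h (f x i).isLt⟩
  else if (f x i : ℕ) < (x i : ℕ) then
    ⟨(x i : ℕ) - 1, lt_of_le_of_lt (Nat.sub_le _ _) (x i).isLt⟩
  else x i

/-- `x + e j` (defined when `x j < b j`) -/
def bump (x : GState b) (j : ι) (h : (x j : ℕ) < b j) : GState b :=
  Function.update x j ⟨(x j : ℕ) + 1, Nat.succ_lt_succ h⟩

/-- `x - e j` -/
def drop (x : GState b) (j : ι) : GState b :=
  Function.update x j ⟨(x j : ℕ) - 1, lt_of_le_of_lt (Nat.sub_le _ _) (x j).isLt⟩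

/-- positive edge `j → i` in the local interaction graph `Gf(x)`:
`∂⁺ⱼfᵢ(x) > 0` or `∂⁻ⱼfᵢ(x) > 0` -/
def PosEdge (f : GState b → GState b) (x : GState b) (j i : ι) : Prop :=
  (∃ h : (x j : ℕ) < b j, (f x i : ℕ) < (f (bump b x j h) i : ℕ)) ∨
  (0 < (x j : ℕ) ∧ (f (drop b x j) i : ℕ) < (f x i : ℕ))

/-- negative edge `j → i` in the local interaction graph `Gf(x)` -/
def NegEdge (f : GState b → GState b) (x : GState b) (j i : ι) : Prop :=
  (∃ h : (x j : ℕ) < b j, (f (bump b x j h) i : ℕ) < (f x i : ℕ)) ∨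
  (0 < (x j : ℕ) ∧ (f x i : ℕ) < (f (drop b x j) i : ℕ))

/-- an edge with sign `s` (`true` = negative) -/
def SignedEdge (f : GState b → GState b) (x : GState b) (s : Bool) (j i : ι) : Prop :=
  if s then NegEdge b f x j i else PosEdge b f x j i

/-- a type-1 functional circuit at `x`, negative iff `neg`: a cycle (with
pairwise-distinct vertices) in the local interaction graph `Gf(x)` whose number
of negative edges is odd iff `neg` -/
def HasType1Circuit (f : GState b → GState b) (x : GState b) (neg : Bool) : Prop :=
  ∃ (k : ℕ) (v : Fin (k + 1) → ι) (s : Fin (k + 1) → Bool),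
    Function.Injective v ∧
    (∀ t, SignedEdge b f x (s t) (v t) (v (t + 1))) ∧
    (Odd (Finset.univ.filter fun t => s t = true).card ↔ neg = true)

/-- mutual reachability -/
def InSameSCC (E : GState b → GState b → Prop) (x y : GState b) : Prop :=
  Relation.ReflTransGen E x y ∧ Relation.ReflTransGen E y x

/-- the strongly connected component of `x` -/
def sccOf (E : GState b → GState b → Prop) (x : GState b) : Set (GState b) :=
  {y | InSameSCC b E x y}

/-- attractor: terminal strongly connected set of states -/
def IsAttractor (E : GState b → GState b → Prop) (A : Set (GState b)) : Prop :=
  A.Nonempty ∧ (∀ x ∈ A, ∀ y ∈ A, Relation.ReflTransGen E x y) ∧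
  (∀ x ∈ A, ∀ y, E x y → y ∈ A)

/-- stable state: no outgoing edges -/
def IsStable (E : GState b → GState b → Prop) (x : GState b) : Prop :=
  ∀ y, ¬ E x y

end Generic

section Binarisation

variable {n : ℕ} {m : Fin n → ℕ}

/-- index set of the Boolean state space `𝔹^(m₁+⋯+mₙ)` -/
abbrev BIdx (m : Fin n → ℕ) := Σ i : Fin n, Fin (m i)

/-- all maximal levels equal to 1 -/
abbrev bOne (m : Fin n → ℕ) : BIdx m → ℕ := fun _ => 1

/-- the Boolean state space `𝔹^(m₁+⋯+mₙ)` -/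
abbrev BState (m : Fin n → ℕ) := GState (bOne m)

/-- the surjection `ψ : 𝔹^(m₁+⋯+mₙ) → M`, counting ones in each block -/
def psi (x : BState m) : GState m := fun i =>
  ⟨∑ j : Fin (m i), (x ⟨i, j⟩ : ℕ), Nat.lt_succ_of_le (by
    calc ∑ j : Fin (m i), (x ⟨i, j⟩ : ℕ) ≤ ∑ _j : Fin (m i), 1 :=
          Finset.sum_le_sum (fun j _ => Nat.lt_succ_iff.mp (x ⟨i, j⟩).isLt)
      _ = m i := by simp)⟩

/-- Van Ham's embedding `b₀ : M → 𝔹^(m₁+⋯+mₙ)`: level `k` ↦ `k` ones then zeros -/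
def vanHam (y : GState m) : BState m := fun p =>
  if (p.2 : ℕ) < (y p.1 : ℕ) then 1 else 0

/-- the binarisation `𝔹(f)` of an (asymptotic) evolution function `f` -/
def binf (f : GState m → GState m) : BState m → BState m := fun x p =>
  if (psi x p.1 : ℕ) < (f (psi x) p.1 : ℕ) then 1
  else if (f (psi x) p.1 : ℕ) < (psi x p.1 : ℕ) then 0
  else x p

/-- the binarisation `𝔹(Γ)` of a grid graph over `M`:
edge `x → x'` iff `d(x,x') = 1` and `ψ(x) → ψ(x')` in `Γ` -/
def binGraph (E : GState m → GState m → Prop) : BState m → BState m → Prop :=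
  fun x x' => dist1 (bOne m) x x' = 1 ∧ E (psi x) (psi x')

/-- the action of `𝕊 = ∏ᵢ S_{mᵢ}` on `𝔹^(m₁+⋯+mₙ)` permuting blocks coordinatewise -/
def act (σ : ∀ i : Fin n, Equiv.Perm (Fin (m i))) (x : BState m) : BState m :=
  fun p => x ⟨p.1, σ p.1 p.2⟩

/-- `𝕊`-symmetric Boolean evolution function -/
def SSym (g : BState m → BState m) : Prop :=
  ∀ (σ : ∀ i : Fin n, Equiv.Perm (Fin (m i))) (x : BState m) (p : BIdx m),
    g (act σ x) p = g x ⟨p.1, σ p.1 p.2⟩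

end Binarisation

/-!
An asymptotic `f` is recovered from the signs of `f x j - x j`, since `f x j` can only be
`m j`, `x j` or `0`; and these signs are exactly what `Γ(f)` records at `x`, as an edge to
`x + e j` or to `x - e j`. Conversely, a grid graph has at most one outward edge in each
direction, so reading the signs off it defines an asymptotic function.
-/

section GridGraph

variable {ι : Type*} {b : ι → ℕ}

section Asym

variable {f g : GState b → GState b}

lemma Asymptotic.asym_eq (hf : Asymptotic b f) : asym b f = f := by
  funext x j
  have hf_le := Nat.lt_succ_iff.mp (f x j).isLt
  have hx_le := Nat.lt_succ_iff.mp (x j).isLt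
  unfold asym
  split_ifs with hup hdown <;> ext <;> rcases hf x j with h | h | h <;>
    simp only [h, Fin.val_last, Fin.val_zero, lt_irrefl] at * <;> omega

lemma asym_congr
    (hup : ∀ x j, (x j : ℕ) < f x j ↔ (x j : ℕ) < g x j)
    (hdown : ∀ x j, (f x j : ℕ) < x j ↔ (g x j : ℕ) < x j) : asym b f = asym b g := by
  funext x j
  simp only [asym, hup, hdown]

end Asym

section Steps

variable [DecidableEq ι]

@[simp]
lemma bump_apply_self (x : GState b) (j : ι) (h : (x j : ℕ) < b j) :
    (bump b x j h j : ℕ) = x j + 1 := by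
  simp [bump]

lemma bump_apply_of_ne (x : GState b) {j k : ι} (h : (x j : ℕ) < b j) (hk : k ≠ j) :
    bump b x j h k = x k :=
  Function.update_of_ne hk _ _

@[simp]
lemma drop_apply_self (x : GState b) (j : ι) : (drop b x j j : ℕ) = x j - 1 := by
  simp [drop]

lemma drop_apply_of_ne (x : GState b) {j k : ι} (hk : k ≠ j) : drop b x j k = x k :=
  Function.update_of_ne hk _ _

def IsUnitStep (x x' : GState b) : Prop :=
  ∃ j, (∃ h, x' = bump b x j h) ∨ (0 < (x j : ℕ) ∧ x' = drop b x j)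

lemma isUnitStep_of_apply {x x' : GState b} {j : ι} (hne : ∀ k, k ≠ j → x' k = x k)
    (hj : (x' j : ℕ) = x j + 1 ∨ (x' j : ℕ) + 1 = x j) : IsUnitStep x x' := by
  have agree_at (y : GState b) (hy : ∀ k, k ≠ j → y k = x k) (hyj : (y j : ℕ) = x' j) :
      x' = y := by
    funext k
    by_cases hk : k = j
    · subst hk; exact Fin.ext hyj.symm
    · rw [hne k hk, hy k hk]
  refine ⟨j, hj.imp (fun hup => ?_) (fun hdown => ⟨by omega, ?_⟩)⟩
  · have h : (x j : ℕ) < b j := by have := (x' j).isLt; omega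
    exact ⟨h, agree_at _ (fun k => bump_apply_of_ne x h) (by simp [hup])⟩
  · exact agree_at _ (fun k => drop_apply_of_ne x) (by simp; omega)

lemma isUnitStep_of_dist1_eq_one [Fintype ι] {x x' : GState b} (h : dist1 b x x' = 1) :
    IsUnitStep x x' := by
  obtain ⟨j, -, hj⟩ := Finset.exists_ne_zero_of_sum_ne_zero (h.trans_ne one_ne_zero)
  have hsplit := Finset.add_sum_erase Finset.univ
    (fun i => Nat.dist (x i : ℕ) (x' i : ℕ)) (Finset.mem_univ j)
  rw [show ∑ i, Nat.dist (x i : ℕ) (x' i : ℕ) = 1 from h] at hsplit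
  have hrest : ∑ i ∈ Finset.univ.erase j, Nat.dist (x i : ℕ) (x' i : ℕ) = 0 := by omega
  rw [Finset.sum_eq_zero_iff] at hrest
  refine isUnitStep_of_apply (j := j)
    (fun k hk => (Fin.ext (Nat.eq_of_dist_eq_zero (hrest k (by simpa using hk)))).symm) ?_
  have hdist : Nat.dist (x j : ℕ) (x' j : ℕ) = 1 := by omega
  unfold Nat.dist at hdist
  omega

lemma eq_of_isUnitStep {R S : GState b → GState b → Prop}
    (hR : ∀ x x', R x x' → IsUnitStep x x') (hS : ∀ x x', S x x' → IsUnitStep x x')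
    (hbump : ∀ x j h, R x (bump b x j h) ↔ S x (bump b x j h))
    (hdrop : ∀ x j, 0 < (x j : ℕ) → (R x (drop b x j) ↔ S x (drop b x j))) : R = S := by
  have step_iff (x x') (hx : IsUnitStep x x') : R x x' ↔ S x x' := by
    obtain ⟨j, ⟨h, rfl⟩ | ⟨hj, rfl⟩⟩ := hx
    exacts [hbump x j h, hdrop x j hj]
  funext x x'
  exact propext ⟨fun h => (step_iff x x' (hR x x' h)).1 h,
    fun h => (step_iff x x' (hS x x' h)).2 h⟩

section Transition

variable {f : GState b → GState b} {x x' : GState b} {j : ι}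

lemma isUnitStep_of_stgEdge (h : stgEdge b f x x') : IsUnitStep x x' := by
  obtain ⟨j, hne, hj⟩ := h
  exact isUnitStep_of_apply hne (hj.imp And.right And.right)

lemma stgEdge_iff_of_apply (hne : ∀ k, k ≠ j → x' k = x k) (hj : x' j ≠ x j) :
    stgEdge b f x x' ↔ ((x j : ℕ) < f x j ∧ (x' j : ℕ) = x j + 1) ∨
      ((f x j : ℕ) < x j ∧ (x' j : ℕ) + 1 = x j) := by
  refine ⟨fun ⟨j', hne', hj'⟩ => ?_, fun h => ⟨j, hne, h⟩⟩
  obtain rfl : j' = j := by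
    by_contra hjj
    exact hj (hne' j (Ne.symm hjj))
  exact hj'

lemma stgEdge_bump_iff (h : (x j : ℕ) < b j) :
    stgEdge b f x (bump b x j h) ↔ (x j : ℕ) < f x j := by
  rw [stgEdge_iff_of_apply (fun k => bump_apply_of_ne x h) (fun he => by
    simpa using congrArg Fin.val he)]
  simp only [bump_apply_self, and_true]
  omega

lemma stgEdge_drop_iff (hx : 0 < (x j : ℕ)) :
    stgEdge b f x (drop b x j) ↔ (f x j : ℕ) < x j := by
  rw [stgEdge_iff_of_apply (fun k => drop_apply_of_ne x) (fun he => by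
    have := congrArg Fin.val he; simp at this; omega)]
  simp only [drop_apply_self]
  omega

end Transition

section Uniqueness

variable {f g : GState b → GState b}

lemma lt_apply_iff_of_stgEdge_eq (hfg : stgEdge b f = stgEdge b g) (x : GState b) (j : ι) :
    (x j : ℕ) < f x j ↔ (x j : ℕ) < g x j := by
  by_cases h : (x j : ℕ) < b j
  · rw [← stgEdge_bump_iff h, ← stgEdge_bump_iff h, hfg]
  · have := (f x j).isLt; have := (g x j).isLt
    omega

lemma apply_lt_iff_of_stgEdge_eq (hfg : stgEdge b f = stgEdge b g) (x : GState b) (j : ι) :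
    (f x j : ℕ) < x j ↔ (g x j : ℕ) < x j := by
  by_cases hx : 0 < (x j : ℕ)
  · rw [← stgEdge_drop_iff hx, ← stgEdge_drop_iff hx, hfg]
  · omega

lemma Asymptotic.eq_of_stgEdge_eq (hf : Asymptotic b f) (hg : Asymptotic b g)
    (hfg : stgEdge b f = stgEdge b g) : f = g := by
  rw [← hf.asym_eq, ← hg.asym_eq]
  exact asym_congr (lt_apply_iff_of_stgEdge_eq hfg) (apply_lt_iff_of_stgEdge_eq hfg)

end Uniqueness

section Existence

variable (E : GState b → GState b → Prop)

open Classical in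
noncomputable def evolutionOf (x : GState b) (j : ι) : Fin (b j + 1) :=
  if ∃ h, E x (bump b x j h) then Fin.last (b j)
  else if 0 < (x j : ℕ) ∧ E x (drop b x j) then 0
  else x j

lemma asymptotic_evolutionOf : Asymptotic b (evolutionOf E) := by
  intro x j
  unfold evolutionOf
  split_ifs
  exacts [Or.inr (Or.inr rfl), Or.inl rfl, Or.inr (Or.inl rfl)]

lemma lt_evolutionOf_iff {x : GState b} {j : ι} (h : (x j : ℕ) < b j) :
    (x j : ℕ) < evolutionOf E x j ↔ E x (bump b x j h) := by
  unfold evolutionOf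
  split_ifs with hup hdown
  · simpa [h] using hup
  · simp only [Fin.val_zero, Nat.not_lt_zero, false_iff]
    exact fun he => hup ⟨h, he⟩
  · simp only [lt_irrefl, false_iff]
    exact fun he => hup ⟨h, he⟩

variable {E}

lemma IsGridGraph.not_bump_of_drop [Fintype ι] (hE : IsGridGraph b E) {x : GState b} {j : ι}
    (h : (x j : ℕ) < b j) (hd : E x (drop b x j)) : ¬ E x (bump b x j h) := by
  intro hb
  have heq := hE.2 x _ _ j hb hd (fun k => bump_apply_of_ne x h) (fun k => drop_apply_of_ne x)
  have := congrArg (fun y : GState b => (y j : ℕ)) heq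
  simp at this
  omega

lemma IsGridGraph.evolutionOf_lt_iff [Fintype ι] (hE : IsGridGraph b E) {x : GState b} {j : ι}
    (hx : 0 < (x j : ℕ)) : (evolutionOf E x j : ℕ) < x j ↔ E x (drop b x j) := by
  unfold evolutionOf
  split_ifs with hup hdown
  · obtain ⟨h, hb⟩ := hup
    simp only [Fin.val_last]
    exact iff_of_false (by have := (x j).isLt; omega) fun hd => hE.not_bump_of_drop h hd hb
  · simpa [hx] using hdown.2
  · simp only [lt_irrefl, false_iff]
    exact fun hd => hdown ⟨hx, hd⟩

lemma IsGridGraph.stgEdge_evolutionOf [Fintype ι] (hE : IsGridGraph b E) :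
    stgEdge b (evolutionOf E) = E :=
  eq_of_isUnitStep (fun _ _ => isUnitStep_of_stgEdge)
    (fun x x' h => isUnitStep_of_dist1_eq_one (hE.1 x x' h))
    (fun _ _ h => (stgEdge_bump_iff h).trans (lt_evolutionOf_iff E h))
    (fun _ _ hx => (stgEdge_drop_iff hx).trans (hE.evolutionOf_lt_iff hx))

end Existence

end Steps

end GridGraph

/-- `f ↦ Γ(f)` is a bijection between asymptotic evolution
functions and grid graphs: every grid graph is the state transition graph of a
unique asymptotic evolution function. -/
theorem grid_graph_unique_asymptotic
    {n : ℕ} {m : Fin n → ℕ} (E : GState m → GState m → Prop)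
    (hE : IsGridGraph m E) :
    ∃! f : GState m → GState m, Asymptotic m f ∧ stgEdge m f = E :=
  ⟨evolutionOf E, ⟨asymptotic_evolutionOf E, hE.stgEdge_evolutionOf⟩,
    fun _ ⟨hg, hgE⟩ => hg.eq_of_stgEdge_eq (asymptotic_evolutionOf E)
      (hgE.trans hE.stgEdge_evolutionOf.symm)⟩

end GRN
end

section
/- For an asymptotic evolution function f on M with binarisation 𝔹(f), ψ induces a graph homomorphism from Γ(𝔹(f)) to Γ(f): if x → x' is an edge of Γ(𝔹(f)) then ψ(x) → ψ(x') is an edge of Γ(f). -/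
namespace Finset

theorem sum_add_eq_sum_add_of_eq_off {ι M : Type*} [Fintype ι] [DecidableEq ι]
    [AddCommMonoid M] {g g' : ι → M} (k : ι) (hoff : ∀ j, j ≠ k → g' j = g j) :
    (∑ j, g' j) + g k = (∑ j, g j) + g' k := by
  have hrest : ∑ j ∈ univ.erase k, g' j = ∑ j ∈ univ.erase k, g j :=
    sum_congr rfl fun j hj => hoff j (ne_of_mem_erase hj)
  rw [← add_sum_erase univ g' (mem_univ k), ← add_sum_erase univ g (mem_univ k), hrest,
    add_right_comm, add_right_comm (g k), add_comm (g' k)]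

end Finset

namespace GRN

section Binarisation

variable {n : ℕ} {m : Fin n → ℕ}

theorem psi_apply_eq_of_block_eq {x x' : BState m} {i : Fin n}
    (hblock : ∀ j : Fin (m i), x' ⟨i, j⟩ = x ⟨i, j⟩) : psi x' i = psi x i :=
  Fin.ext <| by simp only [psi, hblock]

theorem psi_apply_add_eq_of_eq_off {x x' : BState m} {i : Fin n} (k : Fin (m i))
    (hoff : ∀ j, j ≠ k → x' ⟨i, j⟩ = x ⟨i, j⟩) :
    (psi x' i : ℕ) + x ⟨i, k⟩ = (psi x i : ℕ) + x' ⟨i, k⟩ :=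
  Finset.sum_add_eq_sum_add_of_eq_off k fun j hj => congrArg Fin.val (hoff j hj)

theorem psi_lt_apply_of_lt_binf {f : GState m → GState m} {x : BState m} {p : BIdx m}
    (h : (x p : ℕ) < binf f x p) : (psi x p.1 : ℕ) < f (psi x) p.1 := by
  unfold binf at h
  split_ifs at h with hup hdown
  · exact hup
  · exact absurd h (Nat.not_lt_zero _)
  · exact absurd h (lt_irrefl _)

theorem apply_lt_psi_of_binf_lt {f : GState m → GState m} {x : BState m} {p : BIdx m}
    (h : (binf f x p : ℕ) < x p) : (f (psi x) p.1 : ℕ) < psi x p.1 := by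
  unfold binf at h
  split_ifs at h with hup hdown
  · have hbit : (x p : ℕ) < 2 := (x p).isLt
    simp only [Fin.val_one] at h
    omega
  · exact hdown
  · exact absurd h (lt_irrefl _)

end Binarisation

theorem psi_graph_homomorphism_general
    {n : ℕ} {m : Fin n → ℕ} (f : GState m → GState m)
    (x x' : BState m)
    (h : stgEdge (bOne m) (binf f) x x') :
    stgEdge m f (psi x) (psi x') := by
  obtain ⟨⟨i, k⟩, hoff, hstep⟩ := h
  have hother : ∀ c, c ≠ i → psi x' c = psi x c := fun c hc =>
    psi_apply_eq_of_block_eq fun j => hoff ⟨c, j⟩ fun hp => hc (congrArg Sigma.fst hp)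
  have hcount := psi_apply_add_eq_of_eq_off k fun j hj =>
    hoff ⟨i, j⟩ fun hp => hj (eq_of_heq (Sigma.mk.inj_iff.mp hp).2)
  refine ⟨i, hother, ?_⟩
  rcases hstep with ⟨hrise, hbit⟩ | ⟨hfall, hbit⟩
  · exact Or.inl ⟨psi_lt_apply_of_lt_binf hrise, by omega⟩
  · exact Or.inr ⟨apply_lt_psi_of_binf_lt hfall, by omega⟩

/-- `ψ` induces a graph homomorphism `Γ(𝔹(f)) → Γ(f)`. -/
theorem psi_graph_homomorphism
    {n : ℕ} {m : Fin n → ℕ} (f : GState m → GState m)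
    (hf : Asymptotic m f) (x x' : BState m)
    (h : stgEdge (bOne m) (binf f) x x') :
    stgEdge m f (psi x) (psi x') :=
  psi_graph_homomorphism_general f x x' h

end GRN
end

section
/- For an asymptotic evolution function f on M, if y → y' is an edge of Γ(f), then for every x ∈ ψ⁻¹(y) there exists x' ∈ ψ⁻¹(y') such that x → x' is an edge of Γ(𝔹(f)). -/
/-!
Common setup: multilevel discrete networks (Faure–Kaji, "A circuit-preserving
mapping from multilevel to Boolean dynamics").

A gene `i` takes levels in `{0,...,b i}`, encoded as `Fin (b i + 1)`.
The Boolean case is `b i = 1`.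
-/

namespace GRN

/-!
If `ψ(x)ⱼ < f(ψ(x))ⱼ ≤ mⱼ`, block `j` of `x` has a zero bit, and `𝔹(f)` sets every bit of that
block to one, so switching that bit on is an edge of `Γ(𝔹(f))` that `ψ` maps to the increasing
step at `j`; decreasing steps switch a one bit off.
-/

section Lifting

lemma stgEdge_update {ι : Type*} [DecidableEq ι] {b : ι → ℕ}
    (g : GState b → GState b) (x : GState b) (j : ι) (v : Fin (b j + 1))
    (hv : ((x j : ℕ) < (g x j : ℕ) ∧ (v : ℕ) = (x j : ℕ) + 1) ∨
      ((g x j : ℕ) < (x j : ℕ) ∧ (v : ℕ) + 1 = (x j : ℕ))) :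
    stgEdge b g x (Function.update x j v) :=
  ⟨j, fun _ hk => Function.update_of_ne hk _ _, by simpa using hv⟩

variable {n : ℕ} {m : Fin n → ℕ}

lemma coe_psi_apply (x : BState m) (i : Fin n) :
    (psi x i : ℕ) = ∑ k : Fin (m i), (x ⟨i, k⟩ : ℕ) :=
  rfl

lemma psi_update_of_ne (x : BState m) {i j : Fin n} (hij : i ≠ j) (k : Fin (m j))
    (v : Fin 2) : psi (Function.update x ⟨j, k⟩ v) i = psi x i := by
  refine Fin.ext ?_
  simp only [coe_psi_apply]
  refine Finset.sum_congr rfl fun l _ => ?_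
  rw [Function.update_of_ne]
  exact fun hp => hij (congrArg Sigma.fst hp)

lemma coe_psi_update_self_add (x : BState m) (j : Fin n) (k : Fin (m j)) (v : Fin 2) :
    (psi (Function.update x ⟨j, k⟩ v) j : ℕ) + (x ⟨j, k⟩ : ℕ) = (psi x j : ℕ) + (v : ℕ) := by
  have hblock : (fun l : Fin (m j) => ((Function.update x ⟨j, k⟩ v) ⟨j, l⟩ : ℕ))
      = Function.update (fun l : Fin (m j) => (x ⟨j, l⟩ : ℕ)) k (v : ℕ) := by
    funext l
    rcases eq_or_ne l k with rfl | hl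
    · simp
    · rw [Function.update_of_ne hl, Function.update_of_ne (by simpa using hl)]
  rw [coe_psi_apply, coe_psi_apply, hblock, Finset.sum_update_of_mem (Finset.mem_univ k),
    ← Finset.add_sum_erase _ _ (Finset.mem_univ k), Finset.sdiff_singleton_eq_erase]
  ring

lemma psi_update_eq (x : BState m) (j : Fin n) (k : Fin (m j)) (v : Fin 2) (y' : GState m)
    (hoff : ∀ i, i ≠ j → y' i = psi x i)
    (hj : (y' j : ℕ) + (x ⟨j, k⟩ : ℕ) = (psi x j : ℕ) + (v : ℕ)) :
    psi (Function.update x ⟨j, k⟩ v) = y' := by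
  funext i
  rcases eq_or_ne i j with rfl | hij
  · have := coe_psi_update_self_add x i k v
    exact Fin.ext (by omega)
  · rw [psi_update_of_ne x hij, hoff i hij]

lemma exists_bit_eq_zero_of_psi_lt (x : BState m) (j : Fin n) (hj : (psi x j : ℕ) < m j) :
    ∃ k, (x ⟨j, k⟩ : ℕ) = 0 := by
  have hsum : ∑ k : Fin (m j), (x ⟨j, k⟩ : ℕ) < ∑ _k : Fin (m j), 1 := by
    simpa [coe_psi_apply] using hj
  obtain ⟨k, -, hk⟩ := Finset.exists_lt_of_sum_lt hsum
  exact ⟨k, by omega⟩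

lemma exists_bit_eq_one_of_psi_pos (x : BState m) (j : Fin n) (hj : 0 < (psi x j : ℕ)) :
    ∃ k, (x ⟨j, k⟩ : ℕ) = 1 := by
  rw [coe_psi_apply, Finset.sum_pos_iff] at hj
  obtain ⟨k, -, hk⟩ := hj
  exact ⟨k, by have : (x ⟨j, k⟩ : ℕ) < 2 := (x ⟨j, k⟩).isLt; omega⟩

lemma binf_apply_of_lt (f : GState m → GState m) (x : BState m) (p : BIdx m)
    (hp : (psi x p.1 : ℕ) < (f (psi x) p.1 : ℕ)) : binf f x p = 1 := by
  simp [binf, hp]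

lemma binf_apply_of_gt (f : GState m → GState m) (x : BState m) (p : BIdx m)
    (hp : (f (psi x) p.1 : ℕ) < (psi x p.1 : ℕ)) : binf f x p = 0 := by
  simp [binf, hp, hp.not_gt]

end Lifting

theorem edge_lifts_through_psi_general
    {n : ℕ} {m : Fin n → ℕ} (f : GState m → GState m)
    (y y' : GState m)
    (h : stgEdge m f y y') :
    ∀ x : BState m, psi x = y →
      ∃ x' : BState m, psi x' = y' ∧ stgEdge (bOne m) (binf f) x x' := by
  obtain ⟨j, hoff, hstep⟩ := h
  rintro x rfl
  rcases hstep with ⟨hlt, hy'⟩ | ⟨hgt, hy'⟩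
  · obtain ⟨k, hk⟩ := exists_bit_eq_zero_of_psi_lt x j (by have := (f (psi x) j).is_le; omega)
    refine ⟨Function.update x ⟨j, k⟩ 1, psi_update_eq x j k 1 y' hoff (by simp [hk, hy']),
      stgEdge_update _ _ _ _ (Or.inl ⟨?_, ?_⟩)⟩
    all_goals simp [binf_apply_of_lt f x ⟨j, k⟩ hlt, hk]
  · obtain ⟨k, hk⟩ := exists_bit_eq_one_of_psi_pos x j (by omega)
    refine ⟨Function.update x ⟨j, k⟩ 0, psi_update_eq x j k 0 y' hoff (by simp [hk, hy']),
      stgEdge_update _ _ _ _ (Or.inr ⟨?_, ?_⟩)⟩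
    all_goals simp [binf_apply_of_gt f x ⟨j, k⟩ hgt, hk]

/-- every edge of `Γ(f)` lifts through `ψ` at any point of the
fibre to an edge of `Γ(𝔹(f))`. -/
theorem edge_lifts_through_psi
    {n : ℕ} {m : Fin n → ℕ} (f : GState m → GState m)
    (hf : Asymptotic m f) (y y' : GState m)
    (h : stgEdge m f y y') :
    ∀ x : BState m, psi x = y →
      ∃ x' : BState m, psi x' = y' ∧ stgEdge (bOne m) (binf f) x x' :=
  edge_lifts_through_psi_general f y y' h

end GRN
end

section
/- Van Ham's embedding b₀ induces a graph homomorphism Γ(f) → Γ(𝔹(f)): if y → y' is an edge of Γ(f), then b₀(y) → b₀(y') is an edge of Γ(𝔹(f)). -/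
/-!
Common setup: multilevel discrete networks (Faure–Kaji, "A circuit-preserving
mapping from multilevel to Boolean dynamics").

A gene `i` takes levels in `{0,...,b i}`, encoded as `Fin (b i + 1)`.
The Boolean case is `b i = 1`.
-/

namespace GRN

/-!
Since `ψ ∘ b₀ = id`, the binarised function `𝔹(f)` read at `b₀(y)` sees `f(y)`. Raising level `j`
from `y j` to `y j + 1` switches on exactly the bit `(j, y j)` of `b₀(y)`, and `𝔹(f)` pushes that
bit to `1` precisely because `y j < f(y) j`; a decrease is an increase read backwards.
-/

section VanHam

variable {n : ℕ} {m : Fin n → ℕ}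

lemma vanHam_apply_of_lt {y : GState m} {i : Fin n} {k : Fin (m i)} (hk : (k : ℕ) < y i) :
    vanHam y ⟨i, k⟩ = 1 :=
  if_pos hk

lemma vanHam_apply_of_le {y : GState m} {i : Fin n} {k : Fin (m i)} (hk : (y i : ℕ) ≤ k) :
    vanHam y ⟨i, k⟩ = 0 :=
  if_neg hk.not_gt

lemma psi_vanHam (y : GState m) : psi (vanHam y) = y := by
  funext i
  ext
  have hbit (k : Fin (m i)) :
      ((vanHam y ⟨i, k⟩ : Fin 2) : ℕ) = if (k : ℕ) < y i then 1 else 0 := by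
    unfold vanHam
    split_ifs <;> rfl
  simp only [psi, hbit, Finset.sum_boole, Fin.card_filter_val_lt, Nat.cast_id]
  exact min_eq_right (Nat.lt_succ_iff.mp (y i).isLt)

lemma binf_vanHam_of_lt {f : GState m → GState m} {y : GState m} {p : BIdx m}
    (h : (y p.1 : ℕ) < f y p.1) : binf f (vanHam y) p = 1 := by
  simp only [binf, psi_vanHam, if_pos h]

lemma binf_vanHam_of_gt {f : GState m → GState m} {y : GState m} {p : BIdx m}
    (h : (f y p.1 : ℕ) < y p.1) : binf f (vanHam y) p = 0 := by
  simp only [binf, psi_vanHam, if_neg h.not_gt, if_pos h]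

lemma vanHam_eq_of_ne_of_succ {y y' : GState m} {j : Fin n}
    (hrest : ∀ i, i ≠ j → y' i = y i) (hsucc : (y' j : ℕ) = y j + 1) (hj : (y j : ℕ) < m j)
    (p : BIdx m) (hp : p ≠ ⟨j, ⟨y j, hj⟩⟩) : vanHam y' p = vanHam y p := by
  obtain ⟨i, k⟩ := p
  by_cases hij : i = j
  · subst hij
    have hk : (k : ℕ) ≠ y i := fun hk => hp (by congr 1; exact Fin.ext hk)
    unfold vanHam
    dsimp only
    rw [hsucc]
    congr 1
    exact propext (by omega)
  · simp only [vanHam, hrest i hij]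

end VanHam

theorem vanHam_graph_homomorphism_general
    {n : ℕ} {m : Fin n → ℕ} (f : GState m → GState m)
    (y y' : GState m)
    (h : stgEdge m f y y') :
    stgEdge (bOne m) (binf f) (vanHam y) (vanHam y') := by
  obtain ⟨j, hrest, ⟨hlt, hsucc⟩ | ⟨hgt, hpred⟩⟩ := h
  · have hj : (y j : ℕ) < m j := by have := (y' j).isLt; omega
    refine ⟨⟨j, ⟨y j, hj⟩⟩, vanHam_eq_of_ne_of_succ hrest hsucc hj, Or.inl ?_⟩
    rw [binf_vanHam_of_lt hlt, vanHam_apply_of_le (y := y) le_rfl,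
      vanHam_apply_of_lt (by simp [hsucc] : ((⟨y j, hj⟩ : Fin (m j)) : ℕ) < y' j)]
    exact ⟨Nat.zero_lt_one, rfl⟩
  · have hrest' : ∀ i, i ≠ j → y i = y' i := fun i hi => (hrest i hi).symm
    have hj : (y' j : ℕ) < m j := by have := (y j).isLt; omega
    refine ⟨⟨j, ⟨y' j, hj⟩⟩, fun p hp => (vanHam_eq_of_ne_of_succ hrest' hpred.symm hj p hp).symm,
      Or.inr ?_⟩
    rw [binf_vanHam_of_gt hgt, vanHam_apply_of_le (y := y') le_rfl,
      vanHam_apply_of_lt (by simp [← hpred] : ((⟨y' j, hj⟩ : Fin (m j)) : ℕ) < y j)]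
    exact ⟨Nat.zero_lt_one, rfl⟩

/-- Van Ham's embedding induces a graph homomorphism
`Γ(f) → Γ(𝔹(f))`. -/
theorem vanHam_graph_homomorphism
    {n : ℕ} {m : Fin n → ℕ} (f : GState m → GState m)
    (hf : Asymptotic m f) (y y' : GState m)
    (h : stgEdge m f y y') :
    stgEdge (bOne m) (binf f) (vanHam y) (vanHam y') :=
  vanHam_graph_homomorphism_general f y y' h

end GRN
end
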